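/- arXiv:1603.00972 — 3 statements merged into one kernel-verified Lean document; each statement's English description precedes it below -/
import Mathlib

section
/- For a generic configuration [l_1,...,l_n] of n points in P^{m-1} (with 1<m<m+1<n), the square of the map DT, where DT sends [l_1,...,l_n] to [h_{[2-m,n]}, h_{[3-m,1]}, ..., h_{[1-m,n-1]}] (with h_{[i,i+m-2]} the point of the dual projective space determined by the hyperplane spanned by l_i,...,l_{i+m-2}, indices mod n), equals the cyclic shift [l_1,...,l_n] ↦ [l_{1-m}, l_{2-m}, ..., l_{n-m}]. -/
/-!
Write `H_s` for the hyperplane spanned by the `m - 1` consecutive lines `l_s, …, l_{s+m-2}`.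
By biduality, `DT² l` at `i` is the intersection of the `m - 1` consecutive hyperplanes
`H_{i+2-2m}, …, H_{i-m}`, seen in the double dual. Genericity forces any `c ≤ m` consecutive
lines to span a `c`-dimensional space, so by a dimension count the spans of two overlapping
windows of total length at most `m` meet exactly in the span of their overlap. Intersecting
the hyperplanes one at a time, the windows shrink to the single line `l_{i-m}` common to all.
-/

/-- The Donaldson–Thomas transformation of `Conf_n(P^{m-1})`, at the level of
lines: configurations are maps `ZMod n → Submodule ℂ W` (lines in `W`), and the
`i`-th entry of `DT` is the dual line `h_{[i+1-m, i-1]}`, i.e. the annihilator of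
the hyperplane spanned by the `m-1` consecutive lines `l_{i+1-m}, …, l_{i-1}`. -/
noncomputable def DTmap (m n : ℕ) {W : Type} [AddCommGroup W] [Module ℂ W]
    (l : ZMod n → Submodule ℂ W) : ZMod n → Submodule ℂ (Module.Dual ℂ W) :=
  fun i =>
    Submodule.dualAnnihilator (⨆ j : Fin (m - 1), l (i + 1 - (m : ZMod n) + ((j : ℕ) : ZMod n)))

open Submodule Module

theorem iSup_fin_eq_iSup_lt {α : Type*} [CompleteLattice α] (f : ℕ → α) (c : ℕ) :
    ⨆ j : Fin c, f j = ⨆ j < c, f j := by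
  rw [iSup_subtype']
  exact Fin.equivSubtype.iSup_congr fun _ => rfl

theorem iSup_fin_succ_eq_sup {α : Type*} [CompleteLattice α] (f : ℕ → α) (c : ℕ) :
    ⨆ j : Fin (c + 1), f j = (⨆ j : Fin c, f j) ⊔ f c := by
  simp only [iSup_fin_eq_iSup_lt, Nat.iSup_lt_succ]

theorem iInf_fin_succ_eq_inf {α : Type*} [CompleteLattice α] (f : ℕ → α) (c : ℕ) :
    ⨅ j : Fin (c + 1), f j = (⨅ j : Fin c, f j) ⊓ f c :=
  iSup_fin_succ_eq_sup (α := αᵒᵈ) f c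

section ConsecSpan

variable {K V : Type*} [Field K] [AddCommGroup V] [Module K V] {n : ℕ}
  (l : ZMod n → Submodule K V)

noncomputable def consecSpan (c : ℕ) (i : ZMod n) : Submodule K V :=
  ⨆ j : Fin c, l (i + ((j : ℕ) : ZMod n))

theorem consecSpan_zero (i : ZMod n) : consecSpan l 0 i = ⊥ :=
  iSup_of_empty _

theorem consecSpan_succ (c : ℕ) (i : ZMod n) :
    consecSpan l (c + 1) i = consecSpan l c i ⊔ l (i + c) :=
  iSup_fin_succ_eq_sup (fun j : ℕ => l (i + j)) c

theorem consecSpan_one (i : ZMod n) : consecSpan l 1 i = l i := by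
  rw [consecSpan_succ, consecSpan_zero, bot_sup_eq, Nat.cast_zero, add_zero]

theorem consecSpan_add (a b : ℕ) (i : ZMod n) :
    consecSpan l (a + b) i = consecSpan l a i ⊔ consecSpan l b (i + a) := by
  induction b with
  | zero => rw [add_zero, consecSpan_zero, sup_bot_eq]
  | succ b ih =>
    rw [← add_assoc, consecSpan_succ, ih, consecSpan_succ, sup_assoc, Nat.cast_add, add_assoc]

variable [FiniteDimensional K V] (hdim : ∀ i, finrank K (l i) = 1)
  (hgen : ∀ i, consecSpan l (finrank K V) i = ⊤)
include hdim

theorem finrank_consecSpan_le (c : ℕ) (i : ZMod n) : finrank K (consecSpan l c i) ≤ c := by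
  induction c with
  | zero => rw [consecSpan_zero, finrank_bot]
  | succ c ih =>
    rw [consecSpan_succ]
    exact (finrank_add_le_finrank_add_finrank _ _).trans (by rw [hdim]; omega)

include hgen

theorem finrank_consecSpan {c : ℕ} (hc : c ≤ finrank K V) (i : ZMod n) :
    finrank K (consecSpan l c i) = c := by
  have hspan : consecSpan l c i ⊔ consecSpan l (finrank K V - c) (i + c) = ⊤ := by
    rw [← consecSpan_add, Nat.add_sub_cancel' hc, hgen]
  have hsum := finrank_add_le_finrank_add_finrank (consecSpan l c i)
    (consecSpan l (finrank K V - c) (i + c))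
  rw [hspan, finrank_top] at hsum
  have := finrank_consecSpan_le l hdim (finrank K V - c) (i + c)
  have := finrank_consecSpan_le l hdim c i
  omega

theorem consecSpan_inf_consecSpan {d e f : ℕ} (h : d + e + f ≤ finrank K V) (i : ZMod n) :
    consecSpan l (d + e) i ⊓ consecSpan l (e + f) (i + d) = consecSpan l e (i + d) := by
  have hle_left : consecSpan l e (i + d) ≤ consecSpan l (d + e) i := by
    rw [consecSpan_add]; exact le_sup_right
  have hle_right : consecSpan l e (i + d) ≤ consecSpan l (e + f) (i + d) := by
    rw [consecSpan_add]; exact le_sup_left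
  have hsup : consecSpan l (d + e) i ⊔ consecSpan l (e + f) (i + d) =
      consecSpan l (d + (e + f)) i := by
    rw [consecSpan_add l d e, sup_assoc, sup_eq_right.2 hle_right, ← consecSpan_add]
  have hdims := finrank_sup_add_finrank_inf_eq (consecSpan l (d + e) i)
    (consecSpan l (e + f) (i + d))
  rw [hsup, finrank_consecSpan l hdim hgen (by omega), finrank_consecSpan l hdim hgen (by omega),
    finrank_consecSpan l hdim hgen (by omega)] at hdims
  refine (eq_of_le_of_finrank_le (le_inf hle_left hle_right) ?_).symm
  rw [finrank_consecSpan l hdim hgen (by omega)]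
  omega

theorem iInf_consecSpan_hyperplanes {c : ℕ} (hc : c ≤ finrank K V) (k : ZMod n) :
    ⨅ j : Fin c, consecSpan l (finrank K V - 1) (k + ((j : ℕ) : ZMod n)) =
      consecSpan l (finrank K V - c) (k + c - 1) := by
  induction c with
  | zero => rw [iInf_of_empty, Nat.sub_zero, hgen]
  | succ c ih =>
    have key := consecSpan_inf_consecSpan l hdim hgen (d := 1) (e := finrank K V - (c + 1))
      (f := c) (by omega) (k + c - 1)
    rw [show 1 + (finrank K V - (c + 1)) = finrank K V - c by omega,
      show finrank K V - (c + 1) + c = finrank K V - 1 by omega,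
      show k + (c : ZMod n) - 1 + ((1 : ℕ) : ZMod n) = k + c by push_cast; ring] at key
    rw [iInf_fin_succ_eq_inf (fun j : ℕ => consecSpan l (finrank K V - 1) (k + j)),
      ih (by omega), show k + ((c + 1 : ℕ) : ZMod n) - 1 = k + c by push_cast; ring]
    exact key

end ConsecSpan

theorem DTmap_DTmap {V : Type} [AddCommGroup V] [Module ℂ V] [FiniteDimensional ℂ V] {m n : ℕ}
    (l : ZMod n → Submodule ℂ V) (hm : finrank ℂ V = m) (hdim : ∀ i, finrank ℂ (l i) = 1)
    (hgen : ∀ i, consecSpan l m i = ⊤) (i : ZMod n) :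
    DTmap m n (DTmap m n l) i = map (evalEquiv ℂ V).toLinearMap (l (i - m)) := by
  subst hm
  have hpos : 1 ≤ finrank ℂ V := hdim i ▸ Submodule.finrank_le (l i)
  calc DTmap _ n (DTmap _ n l) i
      = (⨆ j : Fin (finrank ℂ V - 1), (consecSpan l (finrank ℂ V - 1)
          (i + 2 - 2 * finrank ℂ V + ((j : ℕ) : ZMod n))).dualAnnihilator).dualAnnihilator := by
        simp only [DTmap, consecSpan]
        congr! 7
        ring
    _ = map (Dual.eval ℂ V)
          (consecSpan l 1 (i + 2 - 2 * finrank ℂ V + (finrank ℂ V - 1 : ℕ) - 1)) := by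
        rw [← Subspace.dualAnnihilator_iInf_eq,
          iInf_consecSpan_hyperplanes l hdim hgen (by omega),
          Subspace.dualAnnihilator_dualAnnihilator_eq_map, Nat.sub_sub_self hpos]
    _ = map (evalEquiv ℂ V).toLinearMap (l (i - finrank ℂ V)) := by
        rw [consecSpan_one, evalEquiv_toLinearMap, Nat.cast_sub hpos]
        congr 2
        ring

theorem stmt_0_general (m n : ℕ)
    (l : ZMod n → Submodule ℂ (Fin m → ℂ))
    (hdim : ∀ i, Module.finrank ℂ (l i) = 1)
    (hgen : ∀ i : ZMod n, (⨆ j : Fin m, l (i + ((j : ℕ) : ZMod n))) = ⊤) :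
    ∀ i : ZMod n, DTmap m n (DTmap m n l) i =
      Submodule.map (Module.evalEquiv ℂ (Fin m → ℂ)).toLinearMap (l (i - (m : ZMod n))) :=
  DTmap_DTmap l (finrank_fin_fun ℂ) hdim hgen

/-- `DT²` equals the cyclic shift by `m` (up to the canonical identification of
`ℂ^m` with its double dual). -/
theorem stmt_0 (m n : ℕ) (hm : 1 < m) (hn : m + 1 < n)
    (l : ZMod n → Submodule ℂ (Fin m → ℂ))
    (hdim : ∀ i, Module.finrank ℂ (l i) = 1)
    (hgen : ∀ i : ZMod n, (⨆ j : Fin m, l (i + ((j : ℕ) : ZMod n))) = ⊤) :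
    ∀ i : ZMod n, DTmap m n (DTmap m n l) i =
      Submodule.map (Module.evalEquiv ℂ (Fin m → ℂ)).toLinearMap (l (i - (m : ZMod n))) :=
  stmt_0_general m n l hdim hgen
end

section
/- Let v_1,...,v_n be vectors in C^m such that any m cyclically consecutive vectors form a basis. Define ξ_i := ⋆(v_{n-i+2} ∧ v_{n-i+3} ∧ ... ∧ v_{n-i+m}) ∈ C^m (indices mod n), using the Hodge star with respect to the standard inner product. Then ξ_1,...,ξ_m form a basis of C^m. -/
/-!
Pair `ξ_{i+1}` with `v_{-j}`: by the defining property of the Hodge star this is the determinant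
of `v_{-j}, v_{1-i}, v_{2-i}, …, v_{m-1-i}`. For `j < i` the vector `v_{-j}` occurs twice, so the
pairing vanishes; for `j = i` the rows are `m` consecutive vectors, so it does not. The pairing
matrix of `ξ_1, …, ξ_m` against `v_0, v_{-1}, …, v_{1-m}` is therefore upper triangular with
nonzero diagonal, hence invertible, and the `ξ_i` are a basis.
-/

/-- The Hodge star of the wedge `w 0 ∧ … ∧ w (m-2)` of `m-1` vectors in `ℂ^m`
(with respect to the standard bilinear inner product and volume form): its `k`-th
coordinate is the determinant of the matrix with first row `e_k` and remaining
rows `w 0, …, w (m-2)`, so that `⟨hodge w, v⟩ = det (v ∧ w 0 ∧ … ∧ w (m-2))`. -/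
noncomputable def hodge (m : ℕ) (w : Fin (m - 1) → Fin m → ℂ) : Fin m → ℂ := fun k =>
  Matrix.det (Matrix.of fun r c : Fin m =>
    if hr : (r : ℕ) = 0 then (if c = k then 1 else 0)
    else w ⟨(r : ℕ) - 1, by have := r.isLt; omega⟩ c)

/-- `ξ_i := ⋆(v_{n-i+2} ∧ … ∧ v_{n-i+m})`, indices mod `n`. -/
noncomputable def xiVec (m n : ℕ) (v : ZMod n → Fin m → ℂ) (i : ZMod n) : Fin m → ℂ :=
  hodge m fun j : Fin (m - 1) => v (2 - i + ((j : ℕ) : ZMod n))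

open Matrix

theorem Matrix.det_updateRow_eq_sum_single {R ι : Type*} [CommRing R] [Fintype ι]
    [DecidableEq ι] (A : Matrix ι ι R) (i : ι) (u : ι → R) :
    (A.updateRow i u).det = ∑ k, u k * (A.updateRow i (Pi.single k 1)).det := by
  rw [det_eq_sum_mul_adjugate_row _ i]
  refine Finset.sum_congr rfl fun k _ => ?_
  rw [adjugate_apply, updateRow_self, updateRow_idem]

theorem hodge_dotProduct {m : ℕ} (hm : 0 < m) (A : Matrix (Fin m) (Fin m) ℂ) (u : Fin m → ℂ) :
    hodge m (fun r => A ⟨r + 1, by have := r.isLt; omega⟩) ⬝ᵥ u = (A.updateRow ⟨0, hm⟩ u).det := by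
  rw [det_updateRow_eq_sum_single, dotProduct]
  refine Finset.sum_congr rfl fun k _ => ?_
  rw [mul_comm, hodge]
  congr 2
  ext r c
  by_cases hr : (r : ℕ) = 0
  · have : r = ⟨0, hm⟩ := Fin.ext hr
    subst this
    simp [Pi.single_apply]
  · have : r ≠ ⟨0, hm⟩ := fun h => hr (congrArg Fin.val h)
    simp only [of_apply, dif_neg hr, updateRow_ne this]
    congr
    omega

theorem xiVec_add_one_dotProduct {m n : ℕ} (hm : 0 < m) (v : ZMod n → Fin m → ℂ) (a : ZMod n)
    (u : Fin m → ℂ) :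
    xiVec m n v (a + 1) ⬝ᵥ u =
      ((Matrix.of fun r : Fin m => v (-a + ((r : ℕ) : ZMod n))).updateRow ⟨0, hm⟩ u).det := by
  rw [← hodge_dotProduct, xiVec]
  congr
  funext j
  exact congrArg v (by push_cast; ring)

theorem xiVec_add_one_dotProduct_self_ne_zero {m n : ℕ} (hm : 0 < m) (v : ZMod n → Fin m → ℂ)
    (a : ZMod n) (hli : LinearIndependent ℂ fun r : Fin m => v (-a + ((r : ℕ) : ZMod n))) :
    xiVec m n v (a + 1) ⬝ᵥ v (-a) ≠ 0 := by
  have hrow : v (-a) = (Matrix.of fun r : Fin m => v (-a + ((r : ℕ) : ZMod n))) ⟨0, hm⟩ :=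
    congrArg v (by simp)
  rw [xiVec_add_one_dotProduct hm, hrow, updateRow_eq_self]
  exact ((isUnit_iff_isUnit_det _).mp (linearIndependent_rows_iff_isUnit.mp hli)).ne_zero

theorem xiVec_dotProduct_eq_zero_of_lt {m n i j : ℕ} (hji : j < i) (him : i < m)
    (v : ZMod n → Fin m → ℂ) :
    xiVec m n v ((i : ZMod n) + 1) ⬝ᵥ v (-(j : ZMod n)) = 0 := by
  rw [xiVec_add_one_dotProduct (by omega)]
  refine det_zero_of_row_eq (i := ⟨0, by omega⟩) (j := ⟨i - j, by omega⟩)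
    (Fin.ne_of_val_ne (by simp only; omega)) ?_
  rw [updateRow_self, updateRow_ne (Fin.ne_of_val_ne (by simp only; omega))]
  exact congrArg v (by simp only [Nat.cast_sub hji.le]; ring)

theorem stmt_3_general (m n : ℕ) (hm : 1 < m)
    (v : ZMod n → Fin m → ℂ)
    (hgen : ∀ i : ZMod n, LinearIndependent ℂ (fun j : Fin m => v (i + ((j : ℕ) : ZMod n)))) :
    LinearIndependent ℂ (fun i : Fin m => xiVec m n v (((i : ℕ) : ZMod n) + 1)) ∧
    Submodule.span ℂ (Set.range fun i : Fin m => xiVec m n v (((i : ℕ) : ZMod n) + 1)) = ⊤ := by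
  have hm0 : 0 < m := by omega
  set Ξ : Matrix (Fin m) (Fin m) ℂ := .of fun i => xiVec m n v (((i : ℕ) : ZMod n) + 1)
  set P := Ξ * (Matrix.of fun j : Fin m => v (-((j : ℕ) : ZMod n)))ᵀ
  have htri : P.IsUpperTriangular := fun i j hji => xiVec_dotProduct_eq_zero_of_lt hji i.isLt v
  have hdiag : ∀ i, P i i ≠ 0 := fun i => xiVec_add_one_dotProduct_self_ne_zero hm0 v _ (hgen _)
  have hdet : P.det ≠ 0 := by
    rw [det_of_isUpperTriangular htri]
    exact Finset.prod_ne_zero_iff.mpr fun i _ => hdiag i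
  rw [det_mul] at hdet
  have hindep : LinearIndependent ℂ fun i => Ξ i :=
    linearIndependent_rows_of_det_ne_zero (left_ne_zero_of_mul hdet)
  exact ⟨hindep, hindep.span_eq_top_of_card_eq_finrank' (by simp)⟩

/-- If any `m` cyclically consecutive vectors of `v_1,…,v_n` are linearly independent,
then `ξ_1, …, ξ_m` form a basis of `ℂ^m`. -/
theorem stmt_3 (m n : ℕ) (hm : 1 < m) (hn : m + 1 < n)
    (v : ZMod n → Fin m → ℂ)
    (hgen : ∀ i : ZMod n, LinearIndependent ℂ (fun j : Fin m => v (i + ((j : ℕ) : ZMod n)))) :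
    LinearIndependent ℂ (fun i : Fin m => xiVec m n v (((i : ℕ) : ZMod n) + 1)) ∧
    Submodule.span ℂ (Set.range fun i : Fin m => xiVec m n v (((i : ℕ) : ZMod n) + 1)) = ⊤ :=
  stmt_3_general m n hm v hgen
end

section
/- The map χ ↦ (f ↦ deg_z⟨f,χ⟩) is a bijection between the lattice of cocharacters of a split algebraic torus X ≅ (C^*)^r and the set of semiring homomorphisms from the semiring P(X) of positive rational functions on X to the tropical semiring Z^t = (Z, max, +). -/
/-- The cocharacter lattice of the split torus `X = (ℂ*)^r`. -/
abbrev LatA (r : ℕ) := Fin r → ℤ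

/-- The ring of Laurent polynomials (regular functions on the torus `(ℂ*)^r`);
its elements supported on single exponents are the characters. -/
abbrev LaurentR (r : ℕ) := AddMonoidAlgebra ℂ (LatA r)

instance (r : ℕ) : IsDomain (LaurentR r) := NoZeroDivisors.to_isDomain _

/-- The field of rational functions on the torus `(ℂ*)^r`. -/
abbrev RatFld (r : ℕ) := FractionRing (LaurentR r)

/-- The rational function attached to a linear combination of characters with
nonnegative integer coefficients `c`. -/
noncomputable def posVal (r : ℕ) (c : LatA r →₀ ℕ) : RatFld r :=
  algebraMap (LaurentR r) _
    (show LaurentR r from AddMonoidAlgebra.ofCoeff (Finsupp.mapRange (Nat.cast : ℕ → ℂ) Nat.cast_zero c))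

/-- `P(X)`: the set of positive rational functions on the torus, i.e. ratios `f/g`
of nonzero linear combinations of characters with positive integer coefficients. -/
noncomputable def Pset (r : ℕ) : Set (RatFld r) :=
  {x | ∃ p q : LatA r →₀ ℕ, p ≠ 0 ∧ q ≠ 0 ∧ x = posVal r p / posVal r q}

/-- `deg_z` of the pullback of a positive combination of characters along the
cocharacter `χ`: the maximum of `⟨a, χ⟩` over the exponents `a` in the support. -/
noncomputable def degAlong (r : ℕ) (χ : LatA r) (p : LatA r →₀ ℕ) (hp : p ≠ 0) : ℤ :=
  p.support.sup' (Finsupp.support_nonempty_iff.mpr hp) fun a => ∑ i, a i * χ i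

/-- `deg_z ⟨x, χ⟩` for a positive rational function `x = f/g`:
`deg_z f(z^χ) − deg_z g(z^χ)` (computed via a chosen representation). -/
noncomputable def degz (r : ℕ) (χ : LatA r)
    (x : RatFld r) (h : ∃ p q : LatA r →₀ ℕ, p ≠ 0 ∧ q ≠ 0 ∧ x = posVal r p / posVal r q) : ℤ :=
  degAlong r χ h.choose h.choose_spec.choose_spec.1 -
    degAlong r χ h.choose_spec.choose h.choose_spec.choose_spec.2.1

/-- A semiring homomorphism from `P(X)` to the tropical semiring `ℤᵗ = (ℤ, max, +)`:
a function taking `1 ↦ 0`, sums to `max` and products to `+` on positive rational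
functions. -/
def IsTropHom (r : ℕ) (Φ : RatFld r → ℤ) : Prop :=
  Φ 1 = 0 ∧
  (∀ x ∈ Pset r, ∀ y ∈ Pset r, Φ (x + y) = max (Φ x) (Φ y)) ∧
  (∀ x ∈ Pset r, ∀ y ∈ Pset r, Φ (x * y) = Φ x + Φ y)

/-!
Positive Laurent polynomials `ℕ[ℤ^r]` embed into the rational functions, and since their
coefficients cannot cancel, `deg_z⟨f, χ⟩ = max_{a ∈ supp f} ⟨a, χ⟩` sends sums to maxima and
products to sums. The cross-multiplication `f g' = f' g` of two representations of the same
quotient then shows that `deg_z⟨·, χ⟩` is well defined on `P(X)`, and a tropical homomorphism.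

Conversely, a tropical homomorphism `Φ` is additive on characters, so `Φ(z^a) = ⟨a, χ⟩` with
`χ_i = Φ(z_i)`. Maxima propagate this to `Φ(f) = deg_z⟨f, χ⟩` on positive polynomials, and
multiplicativity to their quotients. Evaluating at the coordinate characters `z_i` shows that
`χ` is unique.
-/

open AddMonoidAlgebra Finset
open scoped Pointwise

theorem AddMonoidAlgebra.support_coeff_mul_eq_add {R A : Type*} [Semiring R] [PartialOrder R]
    [CanonicallyOrderedAdd R] [NoZeroDivisors R] [Add A] [DecidableEq A] (f g : R[A]) :
    (f * g).coeff.support = f.coeff.support + g.coeff.support := by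
  refine (support_coeff_mul_subset f g).antisymm fun x hx => ?_
  obtain ⟨a, ha, b, hb, rfl⟩ := mem_add.mp hx
  rw [Finsupp.mem_support_iff] at ha hb ⊢
  rw [coeff_mul, Finsupp.sum, Ne, sum_eq_zero_iff, not_forall₂]
  refine ⟨a, Finsupp.mem_support_iff.mpr ha, ?_⟩
  rw [Finsupp.sum, sum_eq_zero_iff, not_forall₂]
  exact ⟨b, Finsupp.mem_support_iff.mpr hb, by simpa using mul_ne_zero ha hb⟩

theorem AddMonoidAlgebra.coeff_mul_ne_zero {R A : Type*} [Semiring R] [Add A]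
    [NoZeroDivisors R[A]] {f g : R[A]} (hf : f.coeff ≠ 0) (hg : g.coeff ≠ 0) :
    (f * g).coeff ≠ 0 := by
  simp_all

theorem AddMonoidAlgebra.coeff_add_ne_zero_left {R A : Type*} [Semiring R] [PartialOrder R]
    [CanonicallyOrderedAdd R] {f : R[A]} (g : R[A]) (hf : f.coeff ≠ 0) : (f + g).coeff ≠ 0 :=
  fun h => hf (Finsupp.ext fun a => (add_eq_zero.mp (DFunLike.congr_fun h a)).1)

theorem Finset.sup'_add_of_map_add {A B : Type*} [Add A] [DecidableEq A] [LinearOrder B] [Add B]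
    [AddLeftMono B] [AddRightMono B] {s t : Finset A} (hs : s.Nonempty) (ht : t.Nonempty)
    {D : A → B} (hD : ∀ a b, D (a + b) = D a + D b) :
    (s + t).sup' (hs.add ht) D = s.sup' hs D + t.sup' ht D := by
  refine le_antisymm (sup'_le _ _ fun x hx => ?_) ?_
  · obtain ⟨a, ha, b, hb, rfl⟩ := mem_add.mp hx
    rw [hD]
    exact add_le_add (le_sup' D ha) (le_sup' D hb)
  · obtain ⟨a, ha, hsa⟩ := exists_mem_eq_sup' hs D
    obtain ⟨b, hb, htb⟩ := exists_mem_eq_sup' ht D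
    rw [hsa, htb, ← hD]
    exact le_sup' D (add_mem_add ha hb)

theorem AddMonoidHom.eq_dotProduct_single {ι : Type*} [Fintype ι] [DecidableEq ι]
    (F : (ι → ℤ) →+ ℤ) (a : ι → ℤ) : F a = a ⬝ᵥ fun i => F (Pi.single i 1) := by
  conv_lhs => rw [← Finset.univ_sum_single a]
  rw [map_sum, dotProduct]
  refine Finset.sum_congr rfl fun i _ => ?_
  rw [← smul_eq_mul, ← map_zsmul, ← Pi.single_smul', smul_eq_mul, mul_one]

section Degree

variable {r : ℕ} (χ : LatA r)

theorem degAlong_eq_sup'_dotProduct (p : LatA r →₀ ℕ) (hp : p ≠ 0) :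
    degAlong r χ p hp = p.support.sup' (Finsupp.support_nonempty_iff.mpr hp) (· ⬝ᵥ χ) := rfl

theorem degAlong_add {f g : ℕ[LatA r]} (hf : f.coeff ≠ 0) (hg : g.coeff ≠ 0)
    (hfg : (f + g).coeff ≠ 0) :
    degAlong r χ (f + g).coeff hfg =
      max (degAlong r χ f.coeff hf) (degAlong r χ g.coeff hg) := by
  classical
  simp only [degAlong_eq_sup'_dotProduct, coeff_add]
  rw [sup'_congr _ Finsupp.support_add_eq_union fun _ _ => rfl, sup'_union]

theorem degAlong_mul {f g : ℕ[LatA r]} (hf : f.coeff ≠ 0) (hg : g.coeff ≠ 0)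
    (hfg : (f * g).coeff ≠ 0) :
    degAlong r χ (f * g).coeff hfg = degAlong r χ f.coeff hf + degAlong r χ g.coeff hg := by
  classical
  simp only [degAlong_eq_sup'_dotProduct]
  rw [sup'_congr _ (support_coeff_mul_eq_add _ _) fun _ _ => rfl]
  exact sup'_add_of_map_add _ _ fun a b => add_dotProduct a b χ

theorem degAlong_single (a : LatA r) {n : ℕ} (hn : n ≠ 0) (h : (single a n).coeff ≠ 0) :
    degAlong r χ (single a n).coeff h = a ⬝ᵥ χ := by
  simp only [degAlong_eq_sup'_dotProduct, coeff_single]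
  rw [sup'_congr _ (Finsupp.support_single a hn) fun _ _ => rfl, sup'_singleton]

theorem degAlong_one (h : (1 : ℕ[LatA r]).coeff ≠ 0) :
    degAlong r χ (1 : ℕ[LatA r]).coeff h = 0 :=
  (degAlong_single χ 0 one_ne_zero h).trans (zero_dotProduct χ)

end Degree

section PositiveFunctions

variable {r : ℕ}

variable (r) in
noncomputable def posRingHom : ℕ[LatA r] →+* RatFld r :=
  (algebraMap (LaurentR r) (RatFld r)).comp (mapRingHom (LatA r) (Nat.castRingHom ℂ))

theorem posVal_eq_posRingHom (p : LatA r →₀ ℕ) : posVal r p = posRingHom r (ofCoeff p) := rfl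

theorem posRingHom_injective : Function.Injective (posRingHom r) :=
  (IsFractionRing.injective (LaurentR r) (RatFld r)).comp
    (map_injective (Nat.castAddMonoidHom ℂ) Nat.cast_injective)

theorem posRingHom_ne_zero {f : ℕ[LatA r]} (hf : f.coeff ≠ 0) : posRingHom r f ≠ 0 :=
  (map_ne_zero_iff _ posRingHom_injective).mpr (by simpa using hf)

theorem div_mem_Pset {f g : ℕ[LatA r]} (hf : f.coeff ≠ 0) (hg : g.coeff ≠ 0) :
    posRingHom r f / posRingHom r g ∈ Pset r :=
  ⟨f.coeff, g.coeff, hf, hg, rfl⟩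

theorem posRingHom_mem_Pset {f : ℕ[LatA r]} (hf : f.coeff ≠ 0) : posRingHom r f ∈ Pset r := by
  simpa using div_mem_Pset hf (by simp : (1 : ℕ[LatA r]).coeff ≠ 0)

variable (χ : LatA r)

theorem degAlong_sub_eq_of_div_eq {f g f' g' : ℕ[LatA r]} (hf : f.coeff ≠ 0)
    (hg : g.coeff ≠ 0) (hf' : f'.coeff ≠ 0) (hg' : g'.coeff ≠ 0)
    (h : posRingHom r f / posRingHom r g = posRingHom r f' / posRingHom r g') :
    degAlong r χ f.coeff hf - degAlong r χ g.coeff hg =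
      degAlong r χ f'.coeff hf' - degAlong r χ g'.coeff hg' := by
  have hcross : f * g' = f' * g := posRingHom_injective <| by
    rwa [map_mul, map_mul, ← div_eq_div_iff (posRingHom_ne_zero hg) (posRingHom_ne_zero hg')]
  have h₁ := degAlong_mul χ hf hg' (coeff_mul_ne_zero hf hg')
  have h₂ := degAlong_mul χ hf' hg (coeff_mul_ne_zero hf' hg)
  simp only [hcross] at h₁
  omega

theorem degz_eq {x : RatFld r} (hx : x ∈ Pset r) {f g : ℕ[LatA r]}
    (hf : f.coeff ≠ 0) (hg : g.coeff ≠ 0) (hfg : x = posRingHom r f / posRingHom r g) :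
    degz r χ x hx = degAlong r χ f.coeff hf - degAlong r χ g.coeff hg := by
  obtain ⟨hp, hq, hx'⟩ := hx.choose_spec.choose_spec
  exact degAlong_sub_eq_of_div_eq χ (f := ofCoeff hx.choose) (g := ofCoeff hx.choose_spec.choose)
    hp hq hf hg (hx'.symm.trans hfg)

theorem degz_posRingHom {f : ℕ[LatA r]} (hf : f.coeff ≠ 0) (hx : posRingHom r f ∈ Pset r) :
    degz r χ (posRingHom r f) hx = degAlong r χ f.coeff hf := by
  have h1 : (1 : ℕ[LatA r]).coeff ≠ 0 := by simp
  rw [degz_eq χ hx hf h1 (by rw [map_one, div_one]), degAlong_one, sub_zero]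

theorem eq_of_forall_degz_eq {χ' : LatA r}
    (h : ∀ x (hx : x ∈ Pset r), degz r χ x hx = degz r χ' x hx) : χ = χ' := by
  funext i
  have hi : (single (Pi.single i 1) 1 : ℕ[LatA r]).coeff ≠ 0 := by simp
  have := h _ (posRingHom_mem_Pset hi)
  rwa [degz_posRingHom χ hi, degz_posRingHom χ' hi, degAlong_single χ _ one_ne_zero,
    degAlong_single χ' _ one_ne_zero, single_dotProduct, single_dotProduct, one_mul,
    one_mul] at this

end PositiveFunctions

section TropicalDegree

variable {r : ℕ}

variable (r) in
open Classical in
noncomputable def tropDeg (χ : LatA r) (x : RatFld r) : ℤ :=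
  if h : x ∈ Pset r then degz r χ x h else 0

variable (χ : LatA r)

theorem tropDeg_eq_degz {x : RatFld r} (hx : x ∈ Pset r) : tropDeg r χ x = degz r χ x hx := by
  rw [tropDeg, dif_pos hx]

theorem tropDeg_div {f g : ℕ[LatA r]} (hf : f.coeff ≠ 0) (hg : g.coeff ≠ 0) :
    tropDeg r χ (posRingHom r f / posRingHom r g) =
      degAlong r χ f.coeff hf - degAlong r χ g.coeff hg := by
  rw [tropDeg_eq_degz χ (div_mem_Pset hf hg), degz_eq χ _ hf hg rfl]

theorem tropDeg_add {f g f' g' : ℕ[LatA r]} (hf : f.coeff ≠ 0) (hg : g.coeff ≠ 0)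
    (hf' : f'.coeff ≠ 0) (hg' : g'.coeff ≠ 0) :
    tropDeg r χ (posRingHom r f / posRingHom r g + posRingHom r f' / posRingHom r g') =
      max (tropDeg r χ (posRingHom r f / posRingHom r g))
        (tropDeg r χ (posRingHom r f' / posRingHom r g')) := by
  have hfg' := coeff_mul_ne_zero hf hg'
  rw [div_add_div _ _ (posRingHom_ne_zero hg) (posRingHom_ne_zero hg'), ← map_mul, ← map_mul,
    ← map_mul, ← map_add,
    tropDeg_div χ (coeff_add_ne_zero_left _ hfg') (coeff_mul_ne_zero hg hg'),
    degAlong_add χ hfg' (coeff_mul_ne_zero hg hf'), tropDeg_div χ hf hg, tropDeg_div χ hf' hg',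
    degAlong_mul χ hf hg', degAlong_mul χ hg hf', degAlong_mul χ hg hg']
  omega

theorem tropDeg_mul {f g f' g' : ℕ[LatA r]} (hf : f.coeff ≠ 0) (hg : g.coeff ≠ 0)
    (hf' : f'.coeff ≠ 0) (hg' : g'.coeff ≠ 0) :
    tropDeg r χ (posRingHom r f / posRingHom r g * (posRingHom r f' / posRingHom r g')) =
      tropDeg r χ (posRingHom r f / posRingHom r g) +
        tropDeg r χ (posRingHom r f' / posRingHom r g') := by
  rw [div_mul_div_comm, ← map_mul, ← map_mul,
    tropDeg_div χ (coeff_mul_ne_zero hf hf') (coeff_mul_ne_zero hg hg'), tropDeg_div χ hf hg,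
    tropDeg_div χ hf' hg', degAlong_mul χ hf hf', degAlong_mul χ hg hg']
  omega

theorem isTropHom_tropDeg : IsTropHom r (tropDeg r χ) := by
  refine ⟨?_, ?_, ?_⟩
  · have h1 : (1 : ℕ[LatA r]).coeff ≠ 0 := by simp
    rw [← div_one (1 : RatFld r), ← map_one (posRingHom r), tropDeg_div χ h1 h1, sub_self]
  · rintro _ ⟨p, q, hp, hq, rfl⟩ _ ⟨p', q', hp', hq', rfl⟩
    exact tropDeg_add χ (f := ofCoeff p) (g := ofCoeff q) (f' := ofCoeff p') (g' := ofCoeff q')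
      hp hq hp' hq'
  · rintro _ ⟨p, q, hp, hq, rfl⟩ _ ⟨p', q', hp', hq', rfl⟩
    exact tropDeg_mul χ (f := ofCoeff p) (g := ofCoeff q) (f' := ofCoeff p') (g' := ofCoeff q')
      hp hq hp' hq'

end TropicalDegree

section Cocharacter

variable {r : ℕ}

variable (r) in
noncomputable def toCochar (Φ : RatFld r → ℤ) : LatA r :=
  fun i => Φ (posRingHom r (single (Pi.single i 1) 1))

namespace IsTropHom

variable {Φ : RatFld r → ℤ}

theorem map_single_one (hΦ : IsTropHom r Φ) (a : LatA r) :
    Φ (posRingHom r (single a 1)) = a ⬝ᵥ toCochar r Φ := by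
  have hmem (b : LatA r) : posRingHom r (single b 1) ∈ Pset r := posRingHom_mem_Pset (by simp)
  let F : LatA r →+ ℤ := .mk' (fun a => Φ (posRingHom r (single a 1))) fun a b => by
    rw [← hΦ.2.2 _ (hmem a) _ (hmem b), ← map_mul, single_mul_single, one_mul]
  exact F.eq_dotProduct_single a

theorem map_single (hΦ : IsTropHom r Φ) (a : LatA r) {n : ℕ} (hn : n ≠ 0) :
    Φ (posRingHom r (single a n)) = a ⬝ᵥ toCochar r Φ := by
  induction n, Nat.one_le_iff_ne_zero.mpr hn using Nat.le_induction with
  | base => exact hΦ.map_single_one a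
  | succ m hm ih =>
    have hm0 : m ≠ 0 := Nat.one_le_iff_ne_zero.mp hm
    rw [single_add, map_add, hΦ.2.1 _ (posRingHom_mem_Pset (by simpa using hm0)) _
      (posRingHom_mem_Pset (by simp)), ih hm0, hΦ.map_single_one, max_self]

theorem map_posRingHom (hΦ : IsTropHom r Φ) {f : ℕ[LatA r]} (hf : f.coeff ≠ 0) :
    Φ (posRingHom r f) = degAlong r (toCochar r Φ) f.coeff hf := by
  induction f using AddMonoidAlgebra.induction with
  | zero => exact absurd rfl hf
  | single_add a n f _ hn ih =>
    have ha : (single a n : ℕ[LatA r]).coeff ≠ 0 := by simpa using hn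
    by_cases hf0 : f.coeff = 0
    · obtain rfl : f = 0 := coeff_eq_zero.mp hf0
      simp only [add_zero] at hf ⊢
      rw [hΦ.map_single a hn, degAlong_single _ a hn]
    · rw [map_add, hΦ.2.1 _ (posRingHom_mem_Pset ha) _ (posRingHom_mem_Pset hf0), ih hf0,
        hΦ.map_single a hn, degAlong_add _ ha hf0, degAlong_single _ a hn]

theorem eq_degz (hΦ : IsTropHom r Φ) {x : RatFld r} (hx : x ∈ Pset r) :
    Φ x = degz r (toCochar r Φ) x hx := by
  obtain ⟨p, q, hp, hq, hxpq⟩ := id hx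
  rw [posVal_eq_posRingHom, posVal_eq_posRingHom] at hxpq
  have hxq : x * posRingHom r (ofCoeff q) = posRingHom r (ofCoeff p) := by
    rw [hxpq, div_mul_cancel₀ _ (posRingHom_ne_zero (f := ofCoeff q) hq)]
  have hmul := hΦ.2.2 x hx _ (posRingHom_mem_Pset (f := ofCoeff q) hq)
  rw [hxq, hΦ.map_posRingHom hp, hΦ.map_posRingHom hq] at hmul
  rw [degz_eq _ hx hp hq hxpq]
  omega

end IsTropHom

end Cocharacter

/-- The map `χ ↦ deg_z⟨·, χ⟩` is a bijection between the cocharacter lattice `ℤ^r`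
and the semiring homomorphisms `P(X) → ℤᵗ`: every `deg_z⟨·, χ⟩` extends to a
tropical semiring homomorphism, and every tropical semiring homomorphism agrees
on `P(X)` with `deg_z⟨·, χ⟩` for a unique cocharacter `χ`. -/
theorem stmt_6 (r : ℕ) :
    (∀ χ : LatA r, ∃ Φ : RatFld r → ℤ, IsTropHom r Φ ∧
      ∀ x (h : x ∈ Pset r), Φ x = degz r χ x h) ∧
    (∀ Φ : RatFld r → ℤ, IsTropHom r Φ →
      ∃! χ : LatA r, ∀ x (h : x ∈ Pset r), Φ x = degz r χ x h) :=
  ⟨fun χ => ⟨tropDeg r χ, isTropHom_tropDeg χ, fun _ => tropDeg_eq_degz χ⟩,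
    fun _ hΦ => ⟨_, fun _ => hΦ.eq_degz, fun _ hχ =>
      eq_of_forall_degz_eq _ fun x hx => (hχ x hx).symm.trans (hΦ.eq_degz hx)⟩⟩
end
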